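/- Let α be a Frenet curve in S³ with curvature κ and torsion τ such that τ(s) ≠ 0 and κ′(s) ≠ 0 for all s ∈ I. Suppose there is a constant C > 0 with 1/κ(s)² + κ′(s)²/(κ(s)⁴τ(s)²) = C for all s ∈ I. Then there exists a unit vector a ∈ ℝ⁴ such that ⟨α(s),a⟩ = 1/√(1+C) for all s ∈ I; that is, α is contained in a geodesic sphere U_{a,σ} with σ = 1/√(1+C), whose mean curvature H satisfies C = 1/H². -/

import Mathlib

noncomputable section

/-- The standard Euclidean inner product on `ℝ⁴`. -/
def eprod (x y : Fin 4 → ℝ) : ℝ :=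
  x 0 * y 0 + x 1 * y 1 + x 2 * y 2 + x 3 * y 3

/-- A Frenet curve in the round sphere `S³ = {p ∈ ℝ⁴ : ⟨p,p⟩ = 1}`:
a `C⁴` unit-speed curve `α : I → S³` on an open interval `I`, together with a
Frenet frame `T, N, B`, a positive `C²` curvature `κ` and a `C¹` torsion `τ`,
such that `T(s), N(s), B(s), α(s)` is an orthonormal basis of `ℝ⁴` for each
`s ∈ I` and the Frenet equations `T′ = κN − α`, `N′ = −κT + τB`, `B′ = −τN`
hold on `I`. -/
structure FrenetCurveS3 where
  I : Set ℝ
  hopen : IsOpen I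
  hconn : I.OrdConnected
  α : ℝ → Fin 4 → ℝ
  T : ℝ → Fin 4 → ℝ
  N : ℝ → Fin 4 → ℝ
  B : ℝ → Fin 4 → ℝ
  κ : ℝ → ℝ
  τ : ℝ → ℝ
  hα_smooth : ContDiffOn ℝ 4 α I
  hκ_smooth : ContDiffOn ℝ 2 κ I
  hτ_smooth : ContDiffOn ℝ 1 τ I
  hκ_pos : ∀ s ∈ I, 0 < κ s
  h_sphere : ∀ s ∈ I, eprod (α s) (α s) = 1
  hT : ∀ s ∈ I, HasDerivAt α (T s) s
  hTT : ∀ s ∈ I, eprod (T s) (T s) = 1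
  hNN : ∀ s ∈ I, eprod (N s) (N s) = 1
  hBB : ∀ s ∈ I, eprod (B s) (B s) = 1
  hTN : ∀ s ∈ I, eprod (T s) (N s) = 0
  hTB : ∀ s ∈ I, eprod (T s) (B s) = 0
  hNB : ∀ s ∈ I, eprod (N s) (B s) = 0
  hTα : ∀ s ∈ I, eprod (T s) (α s) = 0
  hNα : ∀ s ∈ I, eprod (N s) (α s) = 0
  hBα : ∀ s ∈ I, eprod (B s) (α s) = 0
  hbasis : ∀ s ∈ I, ∀ v : Fin 4 → ℝ,
    eprod v v =
      eprod v (T s) ^ 2 + eprod v (N s) ^ 2 + eprod v (B s) ^ 2 + eprod v (α s) ^ 2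
  hFrenetT : ∀ s ∈ I, HasDerivAt T (κ s • N s - α s) s
  hFrenetN : ∀ s ∈ I, HasDerivAt N ((-κ s) • T s + τ s • B s) s
  hFrenetB : ∀ s ∈ I, HasDerivAt B ((-τ s) • N s) s

lemma eprod_comm (x y : Fin 4 → ℝ) : eprod x y = eprod y x := by
  simp [eprod]; ring

lemma eprod_comb_self (a b c : Fin 4 → ℝ) (x y : ℝ) :
    eprod (a + x • b - y • c) (a + x • b - y • c) =
      eprod a a + 2 * x * eprod a b - 2 * y * eprod a c + x ^ 2 * eprod b b
        - 2 * x * y * eprod b c + y ^ 2 * eprod c c := by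
  simp [eprod, Pi.add_apply, Pi.sub_apply, Pi.smul_apply, smul_eq_mul]; ring

lemma eprod_comb_left (v a b c : Fin 4 → ℝ) (x y : ℝ) :
    eprod v (a + x • b - y • c) = eprod v a + x * eprod v b - y * eprod v c := by
  simp [eprod, Pi.add_apply, Pi.sub_apply, Pi.smul_apply, smul_eq_mul]; ring

lemma eprod_smul_right (v m : Fin 4 → ℝ) (c : ℝ) :
    eprod v (c • m) = c * eprod v m := by
  simp [eprod, Pi.smul_apply, smul_eq_mul]; ring

/-- If a Frenet curve `α` in `S³` has `τ ≠ 0`, `κ′ ≠ 0` and satisfies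
`1/κ² + κ′²/(κ⁴τ²) = C` for a constant `C > 0`, then `α` is contained in a
geodesic sphere `U_{a,σ}` with `σ = 1/√(1+C)`: there is a unit vector `a`
with `⟨α(s),a⟩ = 1/√(1+C)` for all `s`. Its mean curvature `H` satisfies
`C = 1/H²`. -/
theorem contained_in_geodesic_sphere_of_spherelike_equation_S3
    (F : FrenetCurveS3)
    (hτ : ∀ s ∈ F.I, F.τ s ≠ 0) (hκ' : ∀ s ∈ F.I, deriv F.κ s ≠ 0)
    (C : ℝ) (hC : 0 < C)
    (heq : ∀ s ∈ F.I,
      1 / F.κ s ^ 2 + (deriv F.κ s) ^ 2 / (F.κ s ^ 4 * F.τ s ^ 2) = C) :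
    ∃ a : Fin 4 → ℝ, eprod a a = 1 ∧
      ∀ s ∈ F.I, eprod (F.α s) a = 1 / Real.sqrt (1 + C) := by
  by_cases hne : F.I.Nonempty
  · obtain ⟨s₀, hs₀⟩ := hne
    set ρ : ℝ → ℝ := fun s => (F.κ s)⁻¹ with hρdef
    set f : ℝ → ℝ := fun s => deriv F.κ s / (F.κ s ^ 2 * F.τ s) with hfdef
    set J : ℝ → Fin 4 → ℝ := fun s => F.α s + ρ s • F.N s - f s • F.B s with hJdef
    -- key derivative fact
    have hJderiv : ∀ s ∈ F.I, HasDerivAt J 0 s := by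
      intro s hs
      have hκpos := F.hκ_pos s hs
      have hκne : F.κ s ≠ 0 := ne_of_gt hκpos
      have hτne := hτ s hs
      have hκ'ne := hκ' s hs
      have hmem : F.I ∈ nhds s := F.hopen.mem_nhds hs
      have hκd : HasDerivAt F.κ (deriv F.κ s) s :=
        ((F.hκ_smooth.differentiableOn (by norm_num)).differentiableAt hmem).hasDerivAt
      have hκ1 : ContDiffOn ℝ 1 (deriv F.κ) F.I :=
        F.hκ_smooth.deriv_of_isOpen F.hopen (by norm_num)
      have hκ2d : DifferentiableAt ℝ (deriv F.κ) s :=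
        (hκ1.differentiableOn (by norm_num)).differentiableAt hmem
      have hτd : DifferentiableAt ℝ F.τ s :=
        (F.hτ_smooth.differentiableOn (by norm_num)).differentiableAt hmem
      have hρd : HasDerivAt ρ (-(deriv F.κ s) / F.κ s ^ 2) s := hκd.inv hκne
      have hden : F.κ s ^ 2 * F.τ s ≠ 0 := by positivity
      have hfdiff : DifferentiableAt ℝ f s :=
        hκ2d.div ((hκd.differentiableAt.pow 2).mul hτd) hden
      have hfd : HasDerivAt f (deriv f s) s := hfdiff.hasDerivAt
      -- the function ρ² + f² is constant C on I
      have hgC : ∀ u ∈ F.I, ρ u ^ 2 + f u ^ 2 = C := by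
        intro u hu
        have hκu : F.κ u ≠ 0 := ne_of_gt (F.hκ_pos u hu)
        have hτu := hτ u hu
        rw [← heq u hu, hρdef, hfdef]
        field_simp
      have hg0 : HasDerivAt (fun u => ρ u ^ 2 + f u ^ 2) 0 s := by
        have hev : (fun u => ρ u ^ 2 + f u ^ 2) =ᶠ[nhds s] fun _ => C :=
          Filter.eventuallyEq_of_mem hmem hgC
        exact (hasDerivAt_const s C).congr_of_eventuallyEq hev
      have hg : HasDerivAt (fun u => ρ u ^ 2 + f u ^ 2)
          ((2 : ℕ) * ρ s ^ 1 * (-(deriv F.κ s) / F.κ s ^ 2)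
            + (2 : ℕ) * f s ^ 1 * deriv f s) s :=
        (hρd.pow 2).add (hfd.pow 2)
      have huniq : (2 : ℕ) * ρ s ^ 1 * (-(deriv F.κ s) / F.κ s ^ 2)
          + (2 : ℕ) * f s ^ 1 * deriv f s = 0 := hg.unique hg0
      have hfs : f s = deriv F.κ s / (F.κ s ^ 2 * F.τ s) := rfl
      have hρs : ρ s = (F.κ s)⁻¹ := rfl
      have hfd_eq : deriv f s = (F.κ s)⁻¹ * F.τ s := by
        rw [hfs, hρs] at huniq
        push_cast at huniq
        have h3 : 2 * deriv F.κ s * (deriv f s * F.κ s ^ 3 - F.κ s ^ 2 * F.τ s) = 0 := by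
          field_simp at huniq
          linear_combination F.κ s ^ 2 * huniq
        have h4 := (mul_eq_zero.mp h3).resolve_left
          (mul_ne_zero two_ne_zero hκ'ne)
        have h5 : deriv f s * F.κ s ^ 3 = F.κ s ^ 2 * F.τ s := by linarith [sub_eq_zero.mp h4]
        field_simp
        apply mul_right_cancel₀ (pow_ne_zero 2 hκne)
        linear_combination h5
      -- now assemble derivative of J
      have hJ : HasDerivAt J
          (F.T s + (ρ s • ((-F.κ s) • F.T s + F.τ s • F.B s)
              + (-(deriv F.κ s) / F.κ s ^ 2) • F.N s)
            - (f s • ((-F.τ s) • F.N s) + deriv f s • F.B s)) s :=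
        ((F.hT s hs).add (hρd.smul (F.hFrenetN s hs))).sub (hfd.smul (F.hFrenetB s hs))
      convert hJ using 1
      rw [hfd_eq, hfs, hρs]
      symm
      match_scalars <;> field_simp <;> ring
    -- J is constant on I
    have hconst : ∀ s ∈ F.I, J s = J s₀ := by
      have key : ∀ u ∈ F.I, ∀ v ∈ F.I, u ≤ v → J v = J u := by
        intro u hu v hv huv
        have hsub : Set.Icc u v ⊆ F.I := F.hconn.out hu hv
        have hcont : ContinuousOn J (Set.Icc u v) := fun x hx =>
          ((hJderiv x (hsub hx)).continuousAt).continuousWithinAt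
        have hder : ∀ x ∈ Set.Ico u v, HasDerivWithinAt J 0 (Set.Ici x) x := fun x hx =>
          (hJderiv x (hsub ⟨hx.1, le_of_lt hx.2⟩)).hasDerivWithinAt
        exact constant_of_has_deriv_right_zero hcont hder v ⟨huv, le_refl v⟩
      intro s hs
      rcases le_total s s₀ with h | h
      · exact (key s hs s₀ hs₀ h).symm
      · exact key s₀ hs₀ s hs h
    -- compute the inner products
    have hsqrtpos : 0 < Real.sqrt (1 + C) := Real.sqrt_pos.mpr (by linarith)
    have hsq : Real.sqrt (1 + C) ^ 2 = 1 + C := Real.sq_sqrt (by linarith)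
    have hαJ : ∀ s ∈ F.I, eprod (F.α s) (J s) = 1 := by
      intro s hs
      have h1 : eprod (F.α s) (F.N s) = 0 := by rw [eprod_comm]; exact F.hNα s hs
      have h2 : eprod (F.α s) (F.B s) = 0 := by rw [eprod_comm]; exact F.hBα s hs
      rw [hJdef]
      simp only [eprod_comb_left, h1, h2, F.h_sphere s hs]
      ring
    have hJJ : eprod (J s₀) (J s₀) = 1 + C := by
      have hαN : eprod (F.α s₀) (F.N s₀) = 0 := by rw [eprod_comm]; exact F.hNα s₀ hs₀
      have hαB : eprod (F.α s₀) (F.B s₀) = 0 := by rw [eprod_comm]; exact F.hBα s₀ hs₀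
      have hgC : ρ s₀ ^ 2 + f s₀ ^ 2 = C := by
        have hκu : F.κ s₀ ≠ 0 := ne_of_gt (F.hκ_pos s₀ hs₀)
        have hτu := hτ s₀ hs₀
        rw [← heq s₀ hs₀, hρdef, hfdef]
        field_simp
      rw [hJdef]
      simp only [eprod_comb_self, F.h_sphere s₀ hs₀, hαN, hαB, F.hNN s₀ hs₀,
        F.hBB s₀ hs₀, F.hNB s₀ hs₀]
      linarith [hgC]
    refine ⟨(Real.sqrt (1 + C))⁻¹ • J s₀, ?_, ?_⟩
    · have : eprod ((Real.sqrt (1 + C))⁻¹ • J s₀) ((Real.sqrt (1 + C))⁻¹ • J s₀)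
          = (Real.sqrt (1 + C))⁻¹ * ((Real.sqrt (1 + C))⁻¹ * eprod (J s₀) (J s₀)) := by
        rw [eprod_smul_right, eprod_comm, eprod_smul_right, eprod_comm (J s₀)]
      rw [this, hJJ, ← hsq]
      field_simp
      rw [Real.sqrt_sq hsqrtpos.le]
    · intro s hs
      rw [eprod_smul_right, ← hconst s hs, hαJ s hs]
      rw [one_div]
      ring
  · refine ⟨![1,0,0,0], by show (1:ℝ) * 1 + 0 * 0 + 0 * 0 + 0 * 0 = 1; norm_num, ?_⟩
    intro s hs
    exact absurd ⟨s, hs⟩ hne
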